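/- arXiv:1908.07058 — 4 statements merged into one kernel-verified Lean document; each statement's English description precedes it below -/
import Mathlib

section
/- For a positive semidefinite real symmetric N×N matrix A and integer n ≥ 1, tr(A^n) ≥ Σ_{a=1}^N (A_{aa})^n. -/
/-!
Diagonalize `A = U D Uᴴ` with `U` unitary and `D = diag λ`, `λ ≥ 0`. Then `A_aa = ∑ᵢ |U_ai|² λᵢ`,
and the matrix `W_ai = |U_ai|²` is doubly stochastic. Jensen's inequality for the convex function
`t ↦ tⁿ` along each row of `W`, summed over the rows, gives `∑ₐ A_aaⁿ ≤ ∑ᵢ λᵢⁿ = tr Aⁿ`,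
because the columns of `W` also sum to one.
-/

open Finset Matrix

theorem ConvexOn.sum_map_mulVec_le {n : Type*} [Fintype n] [DecidableEq n] {s : Set ℝ}
    {f : ℝ → ℝ} (hf : ConvexOn ℝ s f) {M : Matrix n n ℝ} (hM : M ∈ doublyStochastic ℝ n)
    {x : n → ℝ} (hx : ∀ i, x i ∈ s) :
    ∑ i, f ((M *ᵥ x) i) ≤ ∑ i, f (x i) :=
  calc ∑ i, f (∑ j, M i j • x j)
      ≤ ∑ i, ∑ j, M i j • f (x j) := sum_le_sum fun i _ =>
        hf.map_sum_le (fun _ _ => nonneg_of_mem_doublyStochastic hM)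
          (sum_row_of_mem_doublyStochastic hM i) fun j _ => hx j
    _ = ∑ j, (∑ i, M i j) * f (x j) := by rw [sum_comm]; simp only [smul_eq_mul, sum_mul]
    _ = ∑ j, f (x j) := by simp only [sum_col_of_mem_doublyStochastic hM, one_mul]

namespace Matrix

variable {n 𝕜 : Type*} [Fintype n] [DecidableEq n] [RCLike 𝕜]

theorem normSq_mem_doublyStochastic_of_mem_unitaryGroup {U : Matrix n n 𝕜}
    (hU : U ∈ unitaryGroup n 𝕜) :
    (fun i j => ‖U i j‖ ^ 2 : Matrix n n ℝ) ∈ doublyStochastic ℝ n := by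
  have sum_row (i : n) : ∑ j, ‖U i j‖ ^ 2 = 1 := by
    have := congr_fun₂ (mem_unitaryGroup_iff.mp hU) i i
    simp only [mul_apply, star_apply, RCLike.star_def, RCLike.mul_conj, one_apply_eq] at this
    exact_mod_cast this
  have sum_col (j : n) : ∑ i, ‖U i j‖ ^ 2 = 1 := by
    have := congr_fun₂ (mem_unitaryGroup_iff'.mp hU) j j
    simp only [mul_apply, star_apply, RCLike.star_def, RCLike.conj_mul, one_apply_eq] at this
    exact_mod_cast this
  exact mem_doublyStochastic_iff_sum.mpr ⟨fun _ _ => by positivity, sum_row, sum_col⟩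

namespace IsHermitian

variable {A : Matrix n n 𝕜}

theorem trace_pow_eq_sum_eigenvalues_pow (hA : A.IsHermitian) (k : ℕ) :
    (A ^ k).trace = ∑ i, (hA.eigenvalues i : 𝕜) ^ k := by
  conv_lhs => rw [hA.spectral_theorem, ← map_pow, Unitary.conjStarAlgAut_apply, trace_mul_cycle,
    Unitary.coe_star_mul_self, one_mul, diagonal_pow, trace_diagonal]
  simp

theorem apply_self_eq_normSq_eigenvectorUnitary_mulVec_eigenvalues (hA : A.IsHermitian) (a : n) :
    A a a = (((fun i j => ‖(hA.eigenvectorUnitary : Matrix n n 𝕜) i j‖ ^ 2 : Matrix n n ℝ) *ᵥ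
      hA.eigenvalues) a : 𝕜) := by
  conv_lhs => rw [hA.spectral_theorem, Unitary.conjStarAlgAut_apply, mul_apply]
  simp only [mul_diagonal, star_apply, RCLike.star_def, Function.comp_apply, mulVec, dotProduct]
  push_cast
  refine sum_congr rfl fun i _ => ?_
  rw [← RCLike.mul_conj]
  ring

end IsHermitian

end Matrix

theorem trace_pow_ge_sum_diag_pow_general (N n : ℕ)
    (A : Matrix (Fin N) (Fin N) ℝ) (hA : A.PosSemidef) :
    (A ^ n).trace ≥ ∑ a, (A a a) ^ n := by
  simp only [hA.isHermitian.apply_self_eq_normSq_eigenvectorUnitary_mulVec_eigenvalues,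
    hA.isHermitian.trace_pow_eq_sum_eigenvalues_pow, RCLike.ofReal_real_eq_id, id_eq]
  exact ConvexOn.sum_map_mulVec_le (convexOn_pow n)
    (normSq_mem_doublyStochastic_of_mem_unitaryGroup hA.isHermitian.eigenvectorUnitary.2)
    hA.eigenvalues_nonneg

theorem trace_pow_ge_sum_diag_pow (N n : ℕ) (hn : 1 ≤ n)
    (A : Matrix (Fin N) (Fin N) ℝ) (hA : A.PosSemidef) :
    (A ^ n).trace ≥ ∑ a, (A a a) ^ n :=
  trace_pow_ge_sum_diag_pow_general N n A hA
end

section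
/- If all coefficients v_n ≥ 0, then for every N×N matrix S with ±1 entries, the Hamiltonian H(S) = Σ_n (v_n/N^{n-1}) tr[(S S^T)^n] satisfies H(S) ≥ N^2 Σ_n v_n; in particular, when N = 2^k this lower bound is attained by a matrix with mutually orthogonal rows. -/
open Matrix Finset

/-- trace of n-th power of a hermitian real matrix equals sum of n-th powers of eigenvalues -/
lemma trace_pow_eq_sum_eigenvalues {N : ℕ} {A : Matrix (Fin N) (Fin N) ℝ}
    (hA : A.IsHermitian) (n : ℕ) :
    (A ^ n).trace = ∑ i, hA.eigenvalues i ^ n := by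
  set U : Matrix (Fin N) (Fin N) ℝ := (hA.eigenvectorUnitary : Matrix (Fin N) (Fin N) ℝ)
  have hU1 : U * star U = 1 := (Matrix.mem_unitaryGroup_iff).mp hA.eigenvectorUnitary.2
  have hU2 : star U * U = 1 := (Matrix.mem_unitaryGroup_iff').mp hA.eigenvectorUnitary.2
  set D : Matrix (Fin N) (Fin N) ℝ := diagonal (RCLike.ofReal ∘ hA.eigenvalues)
  have hspec : A = U * D * star U := hA.spectral_theorem
  have hpow : ∀ k : ℕ, A ^ k = U * D ^ k * star U := by
    intro k
    induction k with
    | zero => simp [pow_zero, hU1]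
    | succ k ih =>
        rw [pow_succ, ih, pow_succ]
        conv_lhs => rw [hspec]
        have h3 : U * D ^ k * star U * (U * D * star U)
            = U * (D ^ k * (star U * U) * D) * star U := by noncomm_ring
        rw [h3, hU2, mul_one]
  rw [hpow n, Matrix.trace_mul_cycle, hU2, Matrix.one_mul]
  simp [D, Matrix.diagonal_pow, Matrix.trace_diagonal]

lemma trace_pow_ge {N : ℕ} (hN : 0 < N) (S : Matrix (Fin N) (Fin N) ℝ)
    (hS : ∀ i j, S i j = 1 ∨ S i j = -1) {n : ℕ} (hn : 1 ≤ n) :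
    (N : ℝ) ^ (n + 1) ≤ ((S * S.transpose) ^ n).trace := by
  have hct : S.conjTranspose = S.transpose := by
    ext i j; simp [Matrix.conjTranspose_apply, Matrix.transpose_apply]
  have hpsd : (S * S.transpose).PosSemidef := by
    rw [← hct]; exact Matrix.posSemidef_self_mul_conjTranspose S
  have hA := hpsd.isHermitian
  have hnn : ∀ i, 0 ≤ hA.eigenvalues i := hpsd.eigenvalues_nonneg
  -- trace = N^2
  have htr : (S * S.transpose).trace = (N : ℝ) ^ 2 := by
    have hd : ∀ i, (S * S.transpose) i i = (N : ℝ) := by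
      intro i
      rw [Matrix.mul_apply]
      have h1 : ∀ j, S i j * S.transpose j i = 1 := by
        intro j
        rw [Matrix.transpose_apply]
        rcases hS i j with h | h <;> rw [h] <;> norm_num
      rw [Finset.sum_congr rfl (fun j _ => h1 j)]
      simp
    rw [Matrix.trace]
    simp only [Matrix.diag_apply, hd, Finset.sum_const, Finset.card_univ, Fintype.card_fin,
      nsmul_eq_mul]
    ring
  have hsum : ∑ i, hA.eigenvalues i = (N : ℝ) ^ 2 := by
    have h1 := trace_pow_eq_sum_eigenvalues hA 1
    simp only [pow_one] at h1
    rw [← h1, htr]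
  -- Jensen
  obtain ⟨p, rfl⟩ : ∃ p, n = p + 1 := ⟨n - 1, (Nat.succ_pred_eq_of_pos hn).symm⟩
  have hjensen := pow_sum_div_card_le_sum_pow
    (f := hA.eigenvalues) (s := Finset.univ) (fun i _ => hnn i) p
  rw [hsum] at hjensen
  rw [trace_pow_eq_sum_eigenvalues hA]
  refine le_trans ?_ hjensen
  rw [Finset.card_univ, Fintype.card_fin]
  rw [le_div_iff₀ (by positivity)]
  rw [← pow_mul, ← pow_add]
  apply pow_le_pow_right₀ (by exact_mod_cast Nat.one_le_iff_ne_zero.mpr hN.ne')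
  omega

lemma hadamard_exists : ∀ k : ℕ, ∃ S : Matrix (Fin (2 ^ k)) (Fin (2 ^ k)) ℝ,
    (∀ i j, S i j = 1 ∨ S i j = -1) ∧
    S * S.transpose = ((2 ^ k : ℕ) : ℝ) • (1 : Matrix (Fin (2 ^ k)) (Fin (2 ^ k)) ℝ) := by
  intro k
  induction k with
  | zero =>
      refine ⟨Matrix.of fun _ _ => 1, fun i j => Or.inl rfl, ?_⟩
      ext i j
      fin_cases i; fin_cases j
      simp [Matrix.mul_apply, Matrix.one_apply]
  | succ k ih =>
      obtain ⟨S, hS1, hS2⟩ := ih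
      have he : (2 : ℕ) ^ (k + 1) = 2 ^ k * 2 := by ring
      let e : Fin (2 ^ (k + 1)) ≃ Fin (2 ^ k) × Fin 2 :=
        (finCongr he).trans finProdFinEquiv.symm
      let h2 : Fin 2 → Fin 2 → ℝ := fun a b => if a = 1 ∧ b = 1 then -1 else 1
      refine ⟨Matrix.of fun i j => S (e i).1 (e j).1 * h2 (e i).2 (e j).2, ?_, ?_⟩
      · intro i j
        rcases hS1 (e i).1 (e j).1 with h | h <;>
          · by_cases hb : (e i).2 = 1 ∧ (e j).2 = 1 <;> simp [h2, h, hb]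
      · ext i j
        rw [Matrix.mul_apply]
        have hsum : ∑ l : Fin (2 ^ (k + 1)),
            (S (e i).1 (e l).1 * h2 (e i).2 (e l).2) * (S (e j).1 (e l).1 * h2 (e j).2 (e l).2)
            = ∑ p : Fin (2 ^ k) × Fin 2,
            (S (e i).1 p.1 * h2 (e i).2 p.2) * (S (e j).1 p.1 * h2 (e j).2 p.2) := by
          exact Fintype.sum_equiv e _ _ (fun l => rfl)
        simp only [Matrix.transpose_apply, Matrix.of_apply]
        rw [hsum, Fintype.sum_prod_type]
        have hfact : ∑ x : Fin (2 ^ k), ∑ b : Fin 2,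
            (S (e i).1 x * h2 (e i).2 b) * (S (e j).1 x * h2 (e j).2 b)
            = (∑ x : Fin (2 ^ k), S (e i).1 x * S (e j).1 x) *
              (∑ b : Fin 2, h2 (e i).2 b * h2 (e j).2 b) := by
          rw [Finset.sum_mul_sum]
          apply Finset.sum_congr rfl; intro x _
          apply Finset.sum_congr rfl; intro b _
          ring
        rw [hfact]
        have h1 : ∑ x : Fin (2 ^ k), S (e i).1 x * S (e j).1 x
            = ((2 ^ k : ℕ) : ℝ) * (if (e i).1 = (e j).1 then 1 else 0) := by
          have := congrFun (congrFun hS2 (e i).1) (e j).1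
          rw [Matrix.mul_apply] at this
          simp only [Matrix.transpose_apply] at this
          rw [this]
          simp [Matrix.one_apply]
        have h22' : ∀ a b : Fin 2, ∑ x : Fin 2, h2 a x * h2 b x
            = 2 * (if a = b then 1 else 0) := by
          intro a b
          fin_cases a <;> fin_cases b <;> simp [h2, Fin.sum_univ_two] <;> norm_num
        have h22 := h22' (e i).2 (e j).2
        rw [h1, h22]
        have hiff : i = j ↔ ((e i).1 = (e j).1 ∧ (e i).2 = (e j).2) := by
          constructor
          · rintro rfl; exact ⟨rfl, rfl⟩
          · rintro ⟨ha, hb⟩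
            apply e.injective
            exact Prod.ext ha hb
        by_cases hij : i = j
        · subst hij
          simp [Matrix.one_apply, Matrix.smul_apply]
          push_cast [pow_succ]
          ring
        · have : ¬((e i).1 = (e j).1 ∧ (e i).2 = (e j).2) := fun h => hij (hiff.mpr h)
          rcases Decidable.not_and_iff_or_not.mp this with h | h <;>
            simp [Matrix.one_apply, Matrix.smul_apply, hij, h]

theorem hamiltonian_lower_bound_and_attained (m : ℕ) (v : ℕ → ℝ)
    (hv : ∀ n, 0 ≤ v n) :
    (∀ (N : ℕ), 0 < N → ∀ S : Matrix (Fin N) (Fin N) ℝ,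
        (∀ i j, S i j = 1 ∨ S i j = -1) →
        ∑ n ∈ Finset.Icc 1 m, v n / (N : ℝ) ^ (n - 1) * ((S * S.transpose) ^ n).trace
          ≥ (N : ℝ) ^ 2 * ∑ n ∈ Finset.Icc 1 m, v n) ∧
    (∀ k : ℕ, ∃ S : Matrix (Fin (2 ^ k)) (Fin (2 ^ k)) ℝ,
        (∀ i j, S i j = 1 ∨ S i j = -1) ∧
        S * S.transpose = ((2 ^ k : ℕ) : ℝ) • (1 : Matrix (Fin (2 ^ k)) (Fin (2 ^ k)) ℝ) ∧
        ∑ n ∈ Finset.Icc 1 m, v n / ((2 ^ k : ℕ) : ℝ) ^ (n - 1) * ((S * S.transpose) ^ n).trace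
          = ((2 ^ k : ℕ) : ℝ) ^ 2 * ∑ n ∈ Finset.Icc 1 m, v n) := by
  constructor
  · intro N hN S hS
    rw [ge_iff_le, Finset.mul_sum]
    apply Finset.sum_le_sum
    intro n hn
    rw [Finset.mem_Icc] at hn
    have hNpos : (0 : ℝ) < (N : ℝ) := by exact_mod_cast hN
    have hkey := trace_pow_ge hN S hS hn.1
    have hc : v n / (N : ℝ) ^ (n - 1) * (N : ℝ) ^ (n + 1) = (N : ℝ) ^ 2 * v n := by
      rw [div_mul_eq_mul_div, mul_comm ((N:ℝ)^2), div_eq_iff (by positivity),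
        mul_assoc, ← pow_add]
      have h' : n + 1 = 2 + (n - 1) := by omega
      rw [h']
    calc (N : ℝ) ^ 2 * v n = v n / (N : ℝ) ^ (n - 1) * (N : ℝ) ^ (n + 1) := hc.symm
      _ ≤ v n / (N : ℝ) ^ (n - 1) * ((S * S.transpose) ^ n).trace := by
          exact mul_le_mul_of_nonneg_left hkey
            (div_nonneg (hv n) (by positivity))
  · intro k
    obtain ⟨S, hS1, hS2⟩ := hadamard_exists k
    refine ⟨S, hS1, hS2, ?_⟩
    have hNpos : (0 : ℝ) < ((2 ^ k : ℕ) : ℝ) := by positivity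
    rw [Finset.mul_sum]
    apply Finset.sum_congr rfl
    intro n hn
    rw [Finset.mem_Icc] at hn
    rw [hS2, smul_pow, one_pow, Matrix.trace_smul, Matrix.trace_one]
    simp only [smul_eq_mul, Fintype.card_fin]
    rw [div_mul_eq_mul_div, div_eq_iff (by positivity)]
    have hpow2 : ((2 ^ k : ℕ) : ℝ) ^ n * ((2 ^ k : ℕ) : ℝ)
        = ((2 ^ k : ℕ) : ℝ) ^ 2 * ((2 ^ k : ℕ) : ℝ) ^ (n - 1) := by
      rw [← pow_succ, ← pow_add]
      congr 1
      omega
    rw [hpow2]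
    ring
end

section
/- Solving the three equations μ̂a^2/2 + βv_n a^{2n}(2n)!/(4^n n!(n−1)!) = 1, μ̂a^4/8 + βv_n n a^{2n+2}(2n)!/(2·4^n (n+1)!(n−1)!) = 1, and μ̂a^2 + βv_n a^{2n}(2n)!/(4^n (n−1/2)((n−1)!)^2) = 0 for (μ̂, a^2, β) yields a^2 = (4/3)(1 + 1/n) and β^{-1} = (v_n/(2√π)) (4(1+1/n)/3)^n Γ(n−1/2)/Γ(n−1). -/
set_option maxHeartbeats 2000000

lemma gamma_nat_add_half (m : ℕ) :
    Real.Gamma ((m : ℝ) + 1 / 2) =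
      Real.sqrt Real.pi * (Nat.factorial (2 * m) : ℝ) / (4 ^ m * (Nat.factorial m : ℝ)) := by
  induction m with
  | zero =>
    rw [show ((0 : ℕ) : ℝ) + 1 / 2 = 1 / 2 by norm_num, Real.Gamma_one_half_eq]
    simp
  | succ m ih =>
    have h0 : ((m : ℝ) + 1 / 2) ≠ 0 := by positivity
    have : ((m + 1 : ℕ) : ℝ) + 1 / 2 = ((m : ℝ) + 1 / 2) + 1 := by push_cast; ring
    rw [this, Real.Gamma_add_one h0, ih]
    have hf : (Nat.factorial (2 * (m + 1)) : ℝ)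
        = (2 * (m : ℝ) + 2) * (2 * (m : ℝ) + 1) * (Nat.factorial (2 * m) : ℝ) := by
      have : 2 * (m + 1) = (2 * m + 1) + 1 := by ring
      rw [this, Nat.factorial_succ, Nat.factorial_succ]
      push_cast; ring
    have hg : (Nat.factorial (m + 1) : ℝ) = ((m : ℝ) + 1) * (Nat.factorial m : ℝ) := by
      rw [Nat.factorial_succ]; push_cast; ring
    have hfm : (Nat.factorial m : ℝ) ≠ 0 := by positivity
    have h4 : (4 : ℝ) ^ m ≠ 0 := by positivity
    rw [hf, hg]
    field_simp
    ring

theorem critical_point_solution (n : ℕ) (hn : 2 ≤ n) (vn : ℝ) (hvn : 0 < vn)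
    (mu a β : ℝ) (ha : 0 < a) (hβ : 0 < β)
    (h1 : mu * a ^ 2 / 2 + β * vn * a ^ (2 * n) * (Nat.factorial (2 * n) : ℝ)
        / (4 ^ n * (Nat.factorial n : ℝ) * (Nat.factorial (n - 1) : ℝ)) = 1)
    (h2 : mu * a ^ 4 / 8 + β * vn * n * a ^ (2 * n + 2) * (Nat.factorial (2 * n) : ℝ)
        / (2 * 4 ^ n * (Nat.factorial (n + 1) : ℝ) * (Nat.factorial (n - 1) : ℝ)) = 1)
    (h3 : mu * a ^ 2 + β * vn * a ^ (2 * n) * (Nat.factorial (2 * n) : ℝ)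
        / (4 ^ n * ((n : ℝ) - 1 / 2) * ((Nat.factorial (n - 1) : ℝ)) ^ 2) = 0) :
    a ^ 2 = 4 / 3 * (1 + 1 / (n : ℝ)) ∧
    β⁻¹ = vn / (2 * Real.sqrt Real.pi) * ((4 * (1 + 1 / (n : ℝ))) / 3) ^ n *
        Real.Gamma ((n : ℝ) - 1 / 2) / Real.Gamma ((n : ℝ) - 1) := by
  obtain ⟨k, rfl⟩ : ∃ k, n = k + 2 := ⟨n - 2, by omega⟩
  clear hn
  set K : ℝ := (k : ℝ) with hKdef
  have hK0 : (0 : ℝ) ≤ K := Nat.cast_nonneg k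
  have e1 : k + 2 - 1 = k + 1 := rfl
  rw [e1] at h1 h2 h3
  set G : ℝ := (Nat.factorial (k + 1) : ℝ) with hGdef
  set F : ℝ := (Nat.factorial (2 * k + 2) : ℝ) with hFdef
  have hGpos : 0 < G := by
    rw [hGdef]; exact_mod_cast Nat.factorial_pos (k + 1)
  have hFpos : 0 < F := by
    rw [hFdef]; exact_mod_cast Nat.factorial_pos (2 * k + 2)
  have hQpos : (0 : ℝ) < 4 ^ (k + 2) := by positivity
  clear_value K G F
  -- factorial identities
  have f2 : (Nat.factorial (k + 2) : ℝ) = (K + 2) * G := by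
    rw [hGdef, hKdef, show k + 2 = (k + 1) + 1 from rfl, Nat.factorial_succ]
    push_cast; ring
  have f3 : (Nat.factorial (k + 2 + 1) : ℝ) = (K + 3) * (K + 2) * G := by
    rw [hGdef, hKdef, show k + 2 + 1 = (k + 1) + 1 + 1 from rfl, Nat.factorial_succ,
      Nat.factorial_succ]
    push_cast; ring
  have f4 : (Nat.factorial (2 * (k + 2)) : ℝ) = (2 * K + 4) * (2 * K + 3) * F := by
    rw [hFdef, hKdef, show 2 * (k + 2) = (2 * k + 2) + 1 + 1 by ring, Nat.factorial_succ,
      Nat.factorial_succ]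
    push_cast; ring
  -- exponent identities
  have p1 : a ^ (2 * (k + 2)) = a ^ (2 * k + 2) * a ^ 2 := by
    rw [← pow_add]; ring_nf
  have p2 : a ^ (2 * (k + 2) + 2) = a ^ (2 * k + 2) * a ^ 4 := by
    rw [← pow_add]; ring_nf
  rw [f2, f4, p1] at h1
  rw [f3, f4, p2] at h2
  rw [f4, p1] at h3
  -- abbreviate the interaction strength
  set t : ℝ := β * vn * a ^ (2 * k + 2) * a ^ 2 * ((2 * K + 4) * (2 * K + 3)) * F
      / (4 ^ (k + 2) * G ^ 2) with htdef
  clear_value t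
  have htpos : 0 < t := by
    rw [htdef]
    have : 0 < a ^ (2 * k + 2) := by positivity
    positivity
  have hK2 : (K + 2) ≠ 0 := by positivity
  have hK3 : (K + 3) ≠ 0 := by positivity
  have h2K3 : (2 * K + 3) ≠ 0 := by positivity
  have hKhalf : ((K : ℝ) + 2) - 1 / 2 ≠ 0 := by
    have : (0:ℝ) < K + 3/2 := by positivity
    intro h; nlinarith
  have hGne : G ≠ 0 := ne_of_gt hGpos
  have hQne : (4 : ℝ) ^ (k + 2) ≠ 0 := ne_of_gt hQpos
  have hcast : ((k + 2 : ℕ) : ℝ) = K + 2 := by rw [hKdef]; push_cast; ring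
  rw [hcast] at h2 h3 ⊢
  -- rewrite hypotheses in terms of t
  have h1' : mu * a ^ 2 / 2 + t / (K + 2) = 1 := by
    rw [← h1, htdef]; field_simp
  have h2' : mu * a ^ 4 / 8 + t * a ^ 2 / (2 * (K + 3)) = 1 := by
    rw [← h2, htdef]; field_simp
  have h3' : mu * a ^ 2 + t / (K + 3 / 2) = 0 := by
    have h32 : (K + 3 / 2 : ℝ) ≠ 0 := by positivity
    rw [← h3, htdef]
    have : (K + 2) - 1 / 2 = K + 3 / 2 := by ring
    rw [this]
    field_simp
  have h32 : (K + 3 / 2 : ℝ) ≠ 0 := by positivity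
  have hK1 : (K + 1) ≠ 0 := by positivity
  -- solve the linear system for t and mu * a ^ 2
  have ht : t * (K + 1) = (K + 2) * (2 * K + 3) := by
    have e1 : mu * a ^ 2 * (K + 2) + 2 * t = 2 * (K + 2) := by
      field_simp at h1'; linarith [h1']
    have e3 : mu * a ^ 2 * (K + 3 / 2) + t = 0 := by
      field_simp at h3'; linarith [h3']
    linear_combination (K + 3 / 2) * e1 - (K + 2) * e3
  have hx : mu * a ^ 2 * (K + 1) = -2 * (K + 2) := by
    have e1 : mu * a ^ 2 * (K + 2) + 2 * t = 2 * (K + 2) := by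
      field_simp at h1'; linarith [h1']
    have e3 : mu * a ^ 2 * (K + 3 / 2) + t = 0 := by
      field_simp at h3'; linarith [h3']
    linear_combination 2 * e3 - e1
  -- first conclusion
  have ha2 : a ^ 2 = 4 / 3 * (1 + 1 / (K + 2)) := by
    have e2 : mu * a ^ 4 * (K + 3) + 4 * t * a ^ 2 = 8 * (K + 3) := by
      field_simp at h2'; linarith [h2']
    have hmu4 : mu * a ^ 4 = (mu * a ^ 2) * a ^ 2 := by ring
    have key : a ^ 2 * (3 * (K + 2)) * (K + 1) = 4 * (K + 3) * (K + 1) := by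
      linear_combination ((K + 1) / 2) * e2 - ((K + 3) * a ^ 2 / 2) * hx - 2 * a ^ 2 * ht
    have : a ^ 2 * (3 * (K + 2)) = 4 * (K + 3) := by
      have := mul_right_cancel₀ hK1 key
      linarith [this]
    field_simp
    linarith [this]
  refine ⟨ha2, ?_⟩
  -- second conclusion
  have hbase : (4 * (1 + 1 / (K + 2))) / 3 = a ^ 2 := by rw [ha2]; ring
  rw [hbase, ← pow_mul]
  have hpow : a ^ (2 * (k + 2)) = a ^ (2 * k + 2) * a ^ 2 := p1
  rw [hpow]
  -- Gamma values
  have hg1 : Real.Gamma ((K + 2) - 1 / 2) = Real.sqrt Real.pi * F / (4 ^ (k + 1) * G) := by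
    have : (K + 2) - 1 / 2 = ((k + 1 : ℕ) : ℝ) + 1 / 2 := by rw [hKdef]; push_cast; ring
    rw [this, gamma_nat_add_half (k + 1), show 2 * (k + 1) = 2 * k + 2 by ring, hFdef, hGdef]
  have hg2 : Real.Gamma ((K + 2) - 1) = (Nat.factorial k : ℝ) := by
    have : (K + 2) - 1 = ((k : ℕ) : ℝ) + 1 := by rw [hKdef]; push_cast; ring
    rw [this, Real.Gamma_nat_eq_factorial]
  rw [hg1, hg2]
  have hG0pos : (0 : ℝ) < (Nat.factorial k : ℝ) := by exact_mod_cast Nat.factorial_pos k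
  have hG0ne : (Nat.factorial k : ℝ) ≠ 0 := ne_of_gt hG0pos
  have hGG0 : G = (K + 1) * (Nat.factorial k : ℝ) := by
    rw [hGdef, hKdef, Nat.factorial_succ]; push_cast; ring
  have hsqrt : Real.sqrt Real.pi ≠ 0 := by
    have := Real.pi_pos
    positivity
  have hQ1 : (4 : ℝ) ^ (k + 2) = 4 * 4 ^ (k + 1) := by rw [pow_succ]; ring
  have hQ1pos : (0 : ℝ) < (4 : ℝ) ^ (k + 1) := by positivity
  -- now finish: β⁻¹ = RHS
  have hβne : β ≠ 0 := ne_of_gt hβ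
  have hβt : β * vn * a ^ (2 * k + 2) * a ^ 2 * ((2 * K + 4) * (2 * K + 3)) * F
      = t * (4 ^ (k + 2) * G ^ 2) := by
    rw [htdef]; field_simp
  have h2K4 : (2 * K + 4) * (2 * K + 3) ≠ 0 := by positivity
  have hP' : β * vn * a ^ (2 * k + 2) * a ^ 2 * F * ((2 * K + 4) * (2 * K + 3))
      = 2 * 4 ^ (k + 1) * (K + 1) * ((Nat.factorial k : ℝ)) ^ 2 * ((2 * K + 4) * (2 * K + 3)) := by
    rw [hQ1, hGG0] at hβt
    linear_combination hβt + (4 * (4:ℝ) ^ (k + 1) * (K + 1) * ((Nat.factorial k : ℝ)) ^ 2) * ht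
  have hP : β * vn * a ^ (2 * k + 2) * a ^ 2 * F
      = 2 * 4 ^ (k + 1) * (K + 1) * ((Nat.factorial k : ℝ)) ^ 2 :=
    mul_right_cancel₀ h2K4 hP'
  have hmul : β * (vn / (2 * Real.sqrt Real.pi) * (a ^ (2 * k + 2) * a ^ 2) *
      (Real.sqrt Real.pi * F / (4 ^ (k + 1) * G)) / (Nat.factorial k : ℝ)) = 1 := by
    rw [hGG0]
    field_simp
    linear_combination hP
  exact inv_eq_of_mul_eq_one_right hmul
end

section
/- For the energy expansions E_±(T)/T_c = A + B(T−T_c)/T_c + C_±((T−T_c)/T_c)^2 with A = (1−4n^2)/(2n(1−n^2)), B = (1−2n)^2/(2n(1+n)^2), C_+ = −3(1−2n)^2/(4n(1+n)^3) (for T > T_c), C_− = −(1−2n)^2/(2n(1+n)^2) (for T < T_c): the functions E_+ and E_− agree at T_c together with their first derivatives, but their second derivatives differ (C_+ ≠ C_− for all integers n ≥ 2). -/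
lemma quad_hasDeriv (a b c t x : ℝ) :
    HasDerivAt (fun T : ℝ => a + b * (T - t) + c * (T - t) ^ 2)
      (b + c * (2 * (x - t))) x := by
  have h1 : HasDerivAt (fun T : ℝ => T - t) 1 x := (hasDerivAt_id x).sub_const t
  have h2 : HasDerivAt (fun T : ℝ => b * (T - t)) (b * 1) x := h1.const_mul b
  have h3 : HasDerivAt (fun T : ℝ => (T - t) ^ 2) (2 * (x - t) ^ 1 * 1) x := h1.pow 2
  have h4 := (h2.const_add a).add (h3.const_mul c)
  simpa [Pi.add_def, mul_comm, mul_assoc, mul_left_comm] using h4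

lemma quad_deriv (a b c t : ℝ) :
    deriv (fun T : ℝ => a + b * (T - t) + c * (T - t) ^ 2)
      = fun x => b + c * (2 * (x - t)) := by
  funext x; exact (quad_hasDeriv a b c t x).deriv

lemma quad_deriv2 (b c t : ℝ) :
    deriv (fun x : ℝ => b + c * (2 * (x - t))) = fun _ => 2 * c := by
  funext x
  have h1 : HasDerivAt (fun T : ℝ => T - t) 1 x := (hasDerivAt_id x).sub_const t
  have h2 := ((h1.const_mul 2).const_mul c).const_add b
  simpa [mul_comm, mul_assoc, mul_left_comm] using h2

theorem third_order_transition (n : ℕ) (hn : 2 ≤ n) (Tc : ℝ) (hTc : 0 < Tc) :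
    let A : ℝ := (1 - 4 * n ^ 2) / (2 * n * (1 - (n : ℝ) ^ 2))
    let B : ℝ := (1 - 2 * n) ^ 2 / (2 * n * (1 + (n : ℝ)) ^ 2)
    let Cp : ℝ := -3 * (1 - 2 * n) ^ 2 / (4 * n * (1 + (n : ℝ)) ^ 3)
    let Cm : ℝ := -(1 - 2 * n) ^ 2 / (2 * n * (1 + (n : ℝ)) ^ 2)
    let Ep : ℝ → ℝ := fun T => Tc * (A + B * ((T - Tc) / Tc) + Cp * ((T - Tc) / Tc) ^ 2)
    let Em : ℝ → ℝ := fun T => Tc * (A + B * ((T - Tc) / Tc) + Cm * ((T - Tc) / Tc) ^ 2)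
    Ep Tc = Em Tc ∧ deriv Ep Tc = deriv Em Tc ∧
      deriv (deriv Ep) Tc ≠ deriv (deriv Em) Tc ∧ Cp ≠ Cm := by
  intro A B Cp Cm Ep Em
  have hTc' : Tc ≠ 0 := ne_of_gt hTc
  have hn2 : (2 : ℝ) ≤ (n : ℝ) := by exact_mod_cast hn
  have hCpCm : Cp ≠ Cm := by
    simp only [Cp, Cm]
    intro h
    have hn0 : (0:ℝ) < (n:ℝ) := by linarith
    have h1 : (0:ℝ) < 1 + (n:ℝ) := by linarith
    rw [div_eq_div_iff (by positivity) (by positivity)] at h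
    have hs : (0:ℝ) < (1 - 2*(n:ℝ))^2 := by nlinarith
    have hP : (0:ℝ) < (n:ℝ) * (1 + (n:ℝ))^2 * (1 - 2*(n:ℝ))^2 * (2*(n:ℝ) - 1) := by
      have : (0:ℝ) < 2*(n:ℝ) - 1 := by linarith
      positivity
    nlinarith [hP, h]
  have hEp : Ep = fun T => (Tc * A) + B * (T - Tc) + (Cp / Tc) * (T - Tc) ^ 2 := by
    funext T; simp only [Ep]; field_simp
  have hEm : Em = fun T => (Tc * A) + B * (T - Tc) + (Cm / Tc) * (T - Tc) ^ 2 := by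
    funext T; simp only [Em]; field_simp
  refine ⟨by simp only [hEp, hEm]; ring, ?_, ?_, hCpCm⟩
  · rw [hEp, hEm, quad_deriv, quad_deriv]; simp
  · rw [hEp, hEm, quad_deriv, quad_deriv, quad_deriv2, quad_deriv2]
    simp only [ne_eq]
    intro h
    have : Cp / Tc = Cm / Tc := by linarith
    exact hCpCm (by field_simp at this; exact this)
end
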